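/- arXiv:1211.7128 — 2 statements merged into one kernel-verified Lean document; each statement's English description precedes it below -/
import Mathlib

section
/- The number of lattice points in Z^k within l^1 distance p + 1/2 of the point (1/2, 0, ..., 0) equals the sum over i from 0 to k of 2^i * (C(k,i) + C(k-1,i)) * C(p,i). -/
/-!
Split the odd ball by the sign of the first coordinate: its part with `x₁ ≤ 0` is
`{x ∈ B_k(p) | x₁ ≤ 0}`, carried onto the half-ball `H = {x ∈ B_k(p) | x₁ ≥ 0}` by `x₁ ↦ -x₁`,
and its part with `x₁ > 0` is `{x ∈ B_k(p+1) | x₁ > 0}`, carried onto `H` by `x₁ ↦ x₁ - 1`.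
So it has `2 |H|` points. The ball `B_k(p)` consists of two mirror copies of `H` glued along the
slice `x₁ = 0`, a copy of `B_{k-1}(p)`; hence `2 |H| = |B_k(p)| + |B_{k-1}(p)|`. The same
decompositions give the Delannoy recursion `|B_k(p+1)| = |B_k(p)| + |B_{k-1}(p+1)| + |B_{k-1}(p)|`,
which identifies `|B_k(p)|` with `∑ᵢ 2^i C(k,i) C(p,i)`.
-/

open Finset Function

def delannoy (k p : ℕ) : ℕ := ∑ i ∈ range (k + 1), 2 ^ i * k.choose i * p.choose i

theorem delannoy_eq_sum_range (k p : ℕ) {n : ℕ} (h : k < n) :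
    delannoy k p = ∑ i ∈ range n, 2 ^ i * k.choose i * p.choose i := by
  refine sum_subset (range_subset_range.mpr h) fun i _ hi => ?_
  rw [Nat.choose_eq_zero_of_lt (by simpa using hi), mul_zero, zero_mul]

theorem delannoy_eq_one_add_sum_range (k p : ℕ) {n : ℕ} (h : k ≤ n) :
    delannoy k p = 1 + ∑ i ∈ range n, 2 ^ (i + 1) * k.choose (i + 1) * p.choose (i + 1) := by
  rw [delannoy_eq_sum_range k p (Nat.lt_succ_of_le h), sum_range_succ', add_comm]
  simp

theorem delannoy_zero_left (p : ℕ) : delannoy 0 p = 1 := by simp [delannoy]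

theorem delannoy_zero_right (k : ℕ) : delannoy k 0 = 1 := by
  simp [delannoy_eq_one_add_sum_range k 0 le_rfl]

theorem delannoy_succ_succ (j p : ℕ) :
    delannoy (j + 1) (p + 1) = delannoy (j + 1) p + delannoy j (p + 1) + delannoy j p := by
  have hdouble :
      ∑ i ∈ range (j + 1), 2 ^ (i + 1) * j.choose i * p.choose i = 2 * delannoy j p := by
    rw [delannoy, mul_sum]
    exact sum_congr rfl fun i _ => by ring
  have hpascal (i : ℕ) :
      2 ^ (i + 1) * (j + 1).choose (i + 1) * (p + 1).choose (i + 1)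
          + 2 ^ (i + 1) * j.choose (i + 1) * p.choose (i + 1)
        = 2 ^ (i + 1) * (j + 1).choose (i + 1) * p.choose (i + 1)
          + 2 ^ (i + 1) * j.choose (i + 1) * (p + 1).choose (i + 1)
          + 2 ^ (i + 1) * j.choose i * p.choose i := by
    simp only [Nat.choose_succ_succ]
    ring
  have hsum := sum_congr (rfl : range (j + 1) = _) fun i _ => hpascal i
  simp only [sum_add_distrib, hdouble] at hsum
  have hj := delannoy_eq_one_add_sum_range j p (n := j + 1) (by omega)
  rw [delannoy_eq_one_add_sum_range (j + 1) (p + 1) le_rfl,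
    delannoy_eq_one_add_sum_range (j + 1) p le_rfl,
    delannoy_eq_one_add_sum_range j (p + 1) (n := j + 1) (by omega)]
  omega

section L1Ball

variable {ι : Type*} [Fintype ι] [DecidableEq ι]

variable (ι) in
noncomputable def l1Ball (p : ℕ) : Finset (ι → ℤ) :=
  {x ∈ Fintype.piFinset fun _ => Icc (-(p : ℤ)) p | ∑ i, |x i| ≤ p}

theorem mem_l1Ball {p : ℕ} {x : ι → ℤ} : x ∈ l1Ball ι p ↔ ∑ i, |x i| ≤ p := by
  simp only [l1Ball, mem_filter, Fintype.mem_piFinset, mem_Icc, and_iff_right_iff_imp]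
  intro h i
  exact abs_le.mp <| (single_le_sum (fun j _ => abs_nonneg (x j)) (mem_univ i)).trans h

theorem sum_abs_eq_add_sum_erase (x : ι → ℤ) (i₀ : ι) :
    ∑ i, |x i| = |x i₀| + ∑ i ∈ univ.erase i₀, |x i| :=
  (add_sum_erase _ _ (mem_univ i₀)).symm

theorem sum_abs_update (x : ι → ℤ) (i₀ : ι) (v : ℤ) :
    ∑ i, |update x i₀ v i| = |v| + ∑ i ∈ univ.erase i₀, |x i| := by
  rw [sum_abs_eq_add_sum_erase _ i₀, update_self]
  congr 1
  exact sum_congr rfl fun i hi => by rw [update_of_ne (ne_of_mem_erase hi)]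

theorem card_l1Ball_filter_nonpos (p : ℕ) (i₀ : ι) :
    #{x ∈ l1Ball ι p | x i₀ ≤ 0} = #{x ∈ l1Ball ι p | 0 ≤ x i₀} := by
  let reflect (x : ι → ℤ) : ι → ℤ := update x i₀ (-x i₀)
  have reflect_invol (x) : reflect (reflect x) = x := by simp [reflect]
  refine card_nbij' reflect reflect ?_ ?_ (fun x _ => reflect_invol x)
    (fun x _ => reflect_invol x) <;>
  · intro x hx
    simp only [coe_filter, mem_l1Ball, Set.mem_ofPred_eq, reflect, sum_abs_update, abs_neg,
      update_self] at hx ⊢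
    rw [sum_abs_eq_add_sum_erase x i₀] at hx
    exact ⟨hx.1, by linarith [hx.2]⟩

theorem card_l1Ball_succ_filter_pos (p : ℕ) (i₀ : ι) :
    #{x ∈ l1Ball ι (p + 1) | 0 < x i₀} = #{x ∈ l1Ball ι p | 0 ≤ x i₀} := by
  refine card_nbij' (fun x => update x i₀ (x i₀ - 1)) (fun x => update x i₀ (x i₀ + 1))
    ?_ ?_ (fun x _ => by simp) (fun x _ => by simp) <;>
  · intro x hx
    simp only [coe_filter, mem_l1Ball, Set.mem_ofPred_eq, sum_abs_update, update_self] at hx ⊢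
    rw [sum_abs_eq_add_sum_erase x i₀] at hx
    push_cast at hx ⊢
    obtain ⟨hle, hsign⟩ := hx
    rw [abs_of_nonneg (by omega)] at hle ⊢
    omega

theorem card_l1Ball_fin_succ_filter_eq_zero (j p : ℕ) :
    #{x ∈ l1Ball (Fin (j + 1)) p | x 0 = 0} = #(l1Ball (Fin j) p) := by
  refine card_nbij' Fin.tail (fun y => Fin.cons 0 y) ?_ ?_ ?_ ?_
  · intro x hx
    simp only [coe_filter, mem_l1Ball, Set.mem_ofPred_eq, mem_coe, Fin.sum_univ_succ] at hx ⊢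
    simpa [Fin.tail, hx.2] using hx.1
  · intro y hy
    simp only [coe_filter, mem_l1Ball, Set.mem_ofPred_eq, mem_coe, Fin.sum_univ_succ] at hy ⊢
    simpa using hy
  · intro x hx
    simp only [coe_filter, Set.mem_ofPred_eq] at hx
    change Fin.cons 0 (Fin.tail x) = x
    rw [← hx.2, Fin.cons_self_tail]
  · intro y _
    exact Fin.tail_cons _ _

theorem card_l1Ball_add_card_filter_eq_zero (p : ℕ) (i₀ : ι) :
    #(l1Ball ι p) + #{x ∈ l1Ball ι p | x i₀ = 0} = 2 * #{x ∈ l1Ball ι p | 0 ≤ x i₀} := by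
  have hunion : {x ∈ l1Ball ι p | x i₀ ≤ 0} ∪ {x ∈ l1Ball ι p | 0 ≤ x i₀} = l1Ball ι p := by
    ext x; simp only [mem_union, mem_filter]; grind
  have hinter : {x ∈ l1Ball ι p | x i₀ ≤ 0} ∩ {x ∈ l1Ball ι p | 0 ≤ x i₀}
      = {x ∈ l1Ball ι p | x i₀ = 0} := by
    ext x; simp only [mem_inter, mem_filter]; grind
  have h := card_union_add_card_inter {x ∈ l1Ball ι p | x i₀ ≤ 0} {x ∈ l1Ball ι p | 0 ≤ x i₀}
  rw [hunion, hinter, card_l1Ball_filter_nonpos] at h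
  rw [h, two_mul]

theorem card_l1Ball_succ_filter_nonneg (p : ℕ) (i₀ : ι) :
    #{x ∈ l1Ball ι (p + 1) | 0 ≤ x i₀}
      = #{x ∈ l1Ball ι (p + 1) | x i₀ = 0} + #{x ∈ l1Ball ι p | 0 ≤ x i₀} := by
  rw [← card_l1Ball_succ_filter_pos p i₀, ← card_union_of_disjoint]
  · congr 1; ext x; simp only [mem_union, mem_filter]; grind
  · exact disjoint_filter.mpr fun x _ (h0 : x i₀ = 0) (hpos : 0 < x i₀) => hpos.ne' h0

theorem card_l1Ball_zero : #(l1Ball ι 0) = 1 := by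
  rw [card_eq_one]
  refine ⟨0, eq_singleton_iff_unique_mem.mpr ⟨by simp [mem_l1Ball], fun x hx => ?_⟩⟩
  rw [mem_l1Ball, Nat.cast_zero] at hx
  ext i
  exact abs_eq_zero.mp <| (sum_eq_zero_iff_of_nonneg fun i _ => abs_nonneg (x i)).mp
    (le_antisymm hx (sum_nonneg fun i _ => abs_nonneg (x i))) i (mem_univ i)

theorem card_l1Ball_of_isEmpty [IsEmpty ι] (p : ℕ) : #(l1Ball ι p) = 1 := by
  rw [card_eq_one]
  exact ⟨0, eq_singleton_iff_unique_mem.mpr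
    ⟨by simp [mem_l1Ball], fun x _ => Subsingleton.elim _ _⟩⟩

theorem card_l1Ball_fin_succ_succ (j p : ℕ) :
    #(l1Ball (Fin (j + 1)) (p + 1))
      = #(l1Ball (Fin (j + 1)) p) + #(l1Ball (Fin j) (p + 1)) + #(l1Ball (Fin j) p) := by
  have h₁ := card_l1Ball_add_card_filter_eq_zero (p + 1) (0 : Fin (j + 1))
  have h₂ := card_l1Ball_add_card_filter_eq_zero p (0 : Fin (j + 1))
  have h₃ := card_l1Ball_succ_filter_nonneg p (0 : Fin (j + 1))
  rw [card_l1Ball_fin_succ_filter_eq_zero] at h₁ h₂ h₃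
  omega

theorem card_l1Ball_fin_eq_delannoy (k p : ℕ) : #(l1Ball (Fin k) p) = delannoy k p := by
  induction k generalizing p with
  | zero => rw [card_l1Ball_of_isEmpty, delannoy_zero_left]
  | succ j ih =>
    induction p with
    | zero => rw [card_l1Ball_zero, delannoy_zero_right]
    | succ p ihp => rw [card_l1Ball_fin_succ_succ, delannoy_succ_succ, ihp, ih, ih]

theorem ncard_oddL1Ball (p : ℕ) (i₀ : ι) :
    {x : ι → ℤ | |2 * x i₀ - 1| + ∑ i ∈ univ.erase i₀, 2 * |x i| ≤ 2 * (p : ℤ) + 1}.ncard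
      = 2 * #{x ∈ l1Ball ι p | 0 ≤ x i₀} := by
  have hsplit : {x : ι → ℤ | |2 * x i₀ - 1| + ∑ i ∈ univ.erase i₀, 2 * |x i| ≤ 2 * (p : ℤ) + 1}
      = ↑({x ∈ l1Ball ι p | x i₀ ≤ 0} ∪ {x ∈ l1Ball ι (p + 1) | 0 < x i₀}) := by
    ext x
    simp only [Set.mem_ofPred_eq, coe_union, coe_filter, Set.mem_union, mem_l1Ball,
      sum_abs_eq_add_sum_erase x i₀, ← mul_sum]
    push_cast
    rcases le_or_gt (x i₀) 0 with h | h
    · rw [abs_of_nonpos (by omega), abs_of_nonpos h]; omega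
    · rw [abs_of_pos (by omega), abs_of_pos h]; omega
  have hdisj : Disjoint {x ∈ l1Ball ι p | x i₀ ≤ 0} {x ∈ l1Ball ι (p + 1) | 0 < x i₀} :=
    disjoint_left.mpr fun x hx hx' => by
      simp only [mem_filter] at hx hx'
      omega
  rw [hsplit, Set.ncard_coe_finset, card_union_of_disjoint hdisj, card_l1Ball_filter_nonpos,
    card_l1Ball_succ_filter_pos, two_mul]

end L1Ball

theorem stmt1 (k p : ℕ) (hk : 1 ≤ k) :
    {x : Fin k → ℤ |
        |2 * x ⟨0, hk⟩ - 1| + ∑ i ∈ Finset.univ.erase ⟨0, hk⟩, 2 * |x i| ≤ 2 * (p : ℤ) + 1}.ncard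
      = ∑ i ∈ Finset.range (k + 1), 2 ^ i * (k.choose i + (k - 1).choose i) * p.choose i := by
  obtain ⟨j, rfl⟩ : ∃ j, k = j + 1 := ⟨k - 1, by omega⟩
  rw [ncard_oddL1Ball, ← card_l1Ball_add_card_filter_eq_zero, Fin.mk_zero,
    card_l1Ball_fin_succ_filter_eq_zero, card_l1Ball_fin_eq_delannoy,
    card_l1Ball_fin_eq_delannoy, delannoy, delannoy_eq_sum_range j p (n := j + 2) (by omega), ← sum_add_distrib, Nat.add_sub_cancel]
  exact sum_congr rfl fun i _ => by ring
end

section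
/- For every k >= 1 and all sufficiently large p, there exists a subgraph E_k(p) of the k-dimensional mesh containing the origin such that: every vertex has degree at most 4, the origin has degree at most 2, every vertex is at l^1 graph distance at most p from the origin, and |E_k(p)| >= (2^k p^k)/k! - C p^{k-1} for some constant C depending only on k. -/
open SimpleGraph Finset Filter Asymptotics

/-- The `k`-dimensional mesh: graph on `ℤ^k` with edges between points at `ℓ¹` distance 1. -/
def mesh (k : ℕ) : SimpleGraph (Fin k → ℤ) :=
  SimpleGraph.fromRel (fun x y => ∑ i, |x i - y i| = 1)

/-!
Let a point of `ℤ^k` move by `±1` only along a coordinate all of whose predecessors vanish, and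
keep the points of the `ℓ¹`-ball of radius `p` whose support is an upper set of indices. A vertex
`v` then moves only along a pivot: a coordinate `i` with `v` zero before `i` and nonzero after it.
Two pivots `i < i'` have `v i = 0 ≠ v i'`, so there are at most two of them, and only one at the
origin: degrees are at most `4`, and `2` at the origin. Moving the first nonzero coordinate towards
`0` stays in the vertex set, so every vertex is joined to the origin by a walk of length at most
`‖v‖₁ ≤ p`. Finally the `2^k * C(p, k)` points with no zero coordinate are vertices, and
`k! * C(p, k) ≥ (p - k)^k ≥ p^k - k^2 p^(k-1)`.
-/

theorem SimpleGraph.exists_walk_length_le_of_forall_exists_adj_lt {V : Type*}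
    {G : SimpleGraph V} (f : V → ℕ) (a : V) (h : ∀ v, v ≠ a → ∃ w, G.Adj v w ∧ f w < f v)
    (v : V) : ∃ p : G.Walk v a, p.length ≤ f v := by
  induction hn : f v using Nat.strong_induction_on generalizing v with
  | _ n ih =>
    by_cases hva : v = a
    · subst hva
      exact ⟨.nil, by simp⟩
    obtain ⟨w, hvw, hw⟩ := h v hva
    obtain ⟨p, hp⟩ := ih (f w) (hn ▸ hw) w rfl
    exact ⟨.cons hvw p, by simp only [Walk.length_cons]; omega⟩

theorem IsUpperSet.support_update {ι M : Type*} [LinearOrder ι] [Zero M] {v : ι → M} {t : ι}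
    (hv : IsUpperSet (Function.support v)) (hlt : ∀ j < t, v j = 0) (ht : v t ≠ 0) (a : M) :
    IsUpperSet (Function.support (Function.update v t a)) := by
  intro i j hij hi
  by_cases hjt : j = t
  · subst hjt
    rcases hij.lt_or_eq with hij | rfl
    · simp [Function.update_of_ne hij.ne, hlt i hij] at hi
    · exact hi
  · have hvi : v i ≠ 0 := by
      by_cases hit : i = t
      · exact hit ▸ ht
      · simpa [Function.update_of_ne hit] using hi
    simpa [Function.update_of_ne hjt] using hv hij hvi

theorem Nat.sum_range_choose_eq_choose_succ (p k : ℕ) :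
    ∑ q ∈ range p, q.choose k = p.choose (k + 1) := by
  induction p with
  | zero => simp
  | succ p ih => rw [sum_range_succ, ih, Nat.choose_succ_succ', add_comm]

theorem Nat.pow_div_factorial_sub_le_choose (p k : ℕ) :
    (p : ℝ) ^ k / k.factorial - k ^ 2 / k.factorial * (p : ℝ) ^ (k - 1) ≤ p.choose k := by
  have hdesc : (p - k) ^ k ≤ k.factorial * p.choose k := by
    rw [← Nat.descFactorial_eq_factorial_mul_choose]
    exact (Nat.pow_le_pow_left (by omega) k).trans (Nat.pow_sub_le_descFactorial p k)
  have hbp : ((p - k : ℕ) : ℝ) ≤ p := by exact_mod_cast Nat.sub_le p k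
  have hb : ((p - k : ℕ) : ℝ) ^ k ≤ k.factorial * p.choose k := by exact_mod_cast hdesc
  set b : ℝ := ((p - k : ℕ) : ℝ)
  have hb0 : 0 ≤ b := by positivity
  have hpb : (p : ℝ) - b ≤ k := by
    rcases le_total k p with h | h
    · simp [b, Nat.cast_sub h]
    · simp [b, Nat.sub_eq_zero_of_le h]
      exact_mod_cast h
  have hpow : (p : ℝ) ^ k - b ^ k ≤ k ^ 2 * p ^ (k - 1) :=
    calc (p : ℝ) ^ k - b ^ k ≤ |(p : ℝ) ^ k - b ^ k| := le_abs_self _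
      _ ≤ |(p : ℝ) - b| * k * max |(p : ℝ)| |b| ^ (k - 1) := abs_pow_sub_pow_le ..
      _ = ((p : ℝ) - b) * k * p ^ (k - 1) := by
        rw [abs_of_nonneg (by linarith), abs_of_nonneg hb0, abs_of_nonneg (by positivity),
          max_eq_left hbp]
      _ ≤ k * k * p ^ (k - 1) := by gcongr
      _ = k ^ 2 * p ^ (k - 1) := by ring
  rw [div_mul_eq_mul_div, ← sub_div, div_le_iff₀ (by positivity)]
  linarith

namespace Mesh

variable {k : ℕ}

def l1 (x : Fin k → ℤ) : ℕ := ∑ i, (x i).natAbs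

theorem l1_update_lt {x : Fin k → ℤ} {i : Fin k} {a : ℤ} (h : a.natAbs < (x i).natAbs) :
    l1 (Function.update x i a) < l1 x := by
  refine Finset.sum_lt_sum (fun j _ => ?_) ⟨i, mem_univ i, by simpa using h⟩
  by_cases hji : j = i
  · subst hji; simpa using h.le
  · simp [Function.update_of_ne hji]

theorem mesh_adj_update (x : Fin k → ℤ) (i : Fin k) {s : ℤ} (hs : s ∈ ({1, -1} : Set ℤ)) :
    (mesh k).Adj x (Function.update x i (x i + s)) := by
  have hs0 : |s| = 1 := by rcases hs with rfl | rfl <;> simp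
  refine (fromRel_adj _ _ _).2 ⟨fun h => ?_, Or.inl ?_⟩
  · have := congrFun h i
    simp only [Function.update_self, left_eq_add] at this
    simp [this] at hs0
  · rw [Finset.sum_eq_single i (fun j _ hj => by simp [Function.update_of_ne hj]) (by simp)]
    simpa using hs0

def IsPivot (v : Fin k → ℤ) (i : Fin k) : Prop :=
  (∀ j < i, v j = 0) ∧ ∀ j, i < j → v j ≠ 0

theorem injOn_isPivot (v : Fin k → ℤ) : Set.InjOn (fun i => v i = 0) {i | IsPivot v i} := by
  intro i hi i' hi' heq
  simp only at heq
  rcases lt_trichotomy i i' with h | h | h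
  · exact absurd (heq ▸ hi'.1 i h) (hi.2 i' h)
  · exact h
  · exact absurd (heq ▸ hi.1 i' h) (hi'.2 i h)

theorem ncard_isPivot_le_two (v : Fin k → ℤ) : {i | IsPivot v i}.ncard ≤ 2 := by
  calc {i | IsPivot v i}.ncard ≤ (Set.univ : Set Prop).ncard :=
        Set.ncard_le_ncard_of_injOn _ (fun _ _ => Set.mem_univ _) (injOn_isPivot v)
    _ = 2 := by rw [Set.ncard_univ, Nat.card_eq_fintype_card, Fintype.card_prop]

theorem ncard_isPivot_zero_le_one : {i | IsPivot (0 : Fin k → ℤ) i}.ncard ≤ 1 :=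
  (Set.ncard_le_one_iff (Set.toFinite _)).2 fun hi hi' => injOn_isPivot 0 hi hi' (by simp)

def vertsE (k p : ℕ) : Set (Fin k → ℤ) :=
  {x | l1 x ≤ p ∧ IsUpperSet (Function.support x)}

def E (k p : ℕ) : (mesh k).Subgraph where
  verts := vertsE k p
  Adj x y := x ∈ vertsE k p ∧ y ∈ vertsE k p ∧
    ∃ i, (∀ j < i, x j = 0) ∧ ∃ s ∈ ({1, -1} : Set ℤ), y = Function.update x i (x i + s)
  adj_sub := by
    rintro x _ ⟨-, -, i, -, s, hs, rfl⟩
    exact mesh_adj_update x i hs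
  edge_vert h := h.1
  symm := ⟨by
    rintro x _ ⟨hx, hy, i, hlt, s, hs, rfl⟩
    refine ⟨hy, hx, i, fun j hj => ?_, -s, ?_, ?_⟩
    · rw [Function.update_of_ne hj.ne, hlt j hj]
    · rcases hs with rfl | rfl <;> simp
    · simp⟩

theorem zero_mem_vertsE (k p : ℕ) : (0 : Fin k → ℤ) ∈ vertsE k p :=
  ⟨by simp [l1], by simp [isUpperSet_empty]⟩

theorem neighborSet_E_subset (p : ℕ) (v : Fin k → ℤ) :
    (E k p).neighborSet v ⊆ (fun is : Fin k × ℤ => Function.update v is.1 (v is.1 + is.2)) ''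
      ({i | IsPivot v i} ×ˢ {1, -1}) := by
  rintro _ ⟨hv, hy, i, hlt, s, hs, rfl⟩
  refine ⟨(i, s), ⟨⟨hlt, fun j hij => ?_⟩, hs⟩, rfl⟩
  by_cases hvi : v i = 0
  · have hyi : Function.update v i (v i + s) i ≠ 0 := by
      rcases hs with rfl | rfl <;> simp [hvi]
    simpa [Function.update_of_ne hij.ne'] using hy.2 hij.le hyi
  · exact hv.2 hij.le hvi

theorem ncard_neighborSet_E_le (p : ℕ) (v : Fin k → ℤ) :
    ((E k p).neighborSet v).ncard ≤ 2 * {i | IsPivot v i}.ncard := by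
  calc ((E k p).neighborSet v).ncard
      ≤ ({i | IsPivot v i} ×ˢ ({1, -1} : Set ℤ)).ncard :=
        (Set.ncard_le_ncard (neighborSet_E_subset p v)).trans (Set.ncard_image_le)
    _ = 2 * {i | IsPivot v i}.ncard := by
        rw [Set.ncard_prod, Set.ncard_pair (by norm_num), mul_comm]

theorem exists_adj_E_l1_lt {p : ℕ} {v : Fin k → ℤ} (hv : v ∈ vertsE k p) (hv0 : v ≠ 0) :
    ∃ w, (E k p).Adj v w ∧ l1 w < l1 v := by
  obtain ⟨t, ht, htmin⟩ := wellFounded_lt.has_min _ (Function.support_nonempty_iff.2 hv0)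
  have hlt : ∀ j < t, v j = 0 := fun j hj => by_contra fun hvj => htmin j hvj hj
  obtain ⟨s, hs, hdec⟩ : ∃ s ∈ ({1, -1} : Set ℤ), (v t + s).natAbs < (v t).natAbs := by
    rcases lt_or_gt_of_ne ht with h | h
    exacts [⟨1, by simp, by omega⟩, ⟨-1, by simp, by omega⟩]
  have hl1 := l1_update_lt hdec
  refine ⟨_, ⟨hv, ⟨hl1.le.trans hv.1, hv.2.support_update hlt ht _⟩, t, hlt, s, hs, rfl⟩, hl1⟩

theorem exists_walk_E_length_le (p : ℕ) (v : (E k p).verts) :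
    ∃ w : (E k p).coe.Walk v ⟨0, zero_mem_vertsE k p⟩, w.length ≤ p := by
  have descent (u : (E k p).verts) (hu : u ≠ ⟨0, zero_mem_vertsE k p⟩) :
      ∃ w, (E k p).coe.Adj u w ∧ l1 w.1 < l1 u.1 := by
    obtain ⟨w, huw, hw⟩ := exists_adj_E_l1_lt u.2 fun h => hu (Subtype.ext h)
    exact ⟨⟨w, huw.2.1⟩, huw, hw⟩
  obtain ⟨w, hw⟩ := exists_walk_length_le_of_forall_exists_adj_lt _ _ descent v
  exact ⟨w, hw.trans v.2.1⟩

def nonzeroBall : (k : ℕ) → ℕ → Finset (Fin k → ℤ)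
  | 0, _ => {0}
  | k + 1, p => (range p).biUnion fun q =>
      (nonzeroBall k q).image (Fin.cons ((p - q : ℕ) : ℤ)) ∪
        (nonzeroBall k q).image (Fin.cons (-((p - q : ℕ) : ℤ)))

theorem mem_nonzeroBall_succ {p : ℕ} {x : Fin (k + 1) → ℤ} :
    x ∈ nonzeroBall (k + 1) p ↔ ∃ q < p, Fin.tail x ∈ nonzeroBall k q ∧ (x 0).natAbs = p - q := by
  simp only [nonzeroBall, mem_biUnion, mem_range, mem_union, mem_image]
  constructor
  · rintro ⟨q, hq, ⟨y, hy, rfl⟩ | ⟨y, hy, rfl⟩⟩ <;> exact ⟨q, hq, by simpa using hy, by simp⟩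
  · rintro ⟨q, hq, hx, hx0⟩
    refine ⟨q, hq, ?_⟩
    rcases Int.natAbs_eq (x 0) with h | h
    · exact .inl ⟨_, hx, by rw [← hx0, ← h, Fin.cons_self_tail]⟩
    · exact .inr ⟨_, hx, by rw [← hx0, ← h, Fin.cons_self_tail]⟩

theorem ne_zero_of_mem_nonzeroBall {p : ℕ} {x : Fin k → ℤ} (hx : x ∈ nonzeroBall k p)
    (i : Fin k) : x i ≠ 0 := by
  induction k generalizing p with
  | zero => exact i.elim0
  | succ k ih =>
    obtain ⟨q, hq, htail, hx0⟩ := mem_nonzeroBall_succ.1 hx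
    induction i using Fin.cases with
    | zero => omega
    | succ i => exact ih htail i

theorem l1_le_of_mem_nonzeroBall {p : ℕ} {x : Fin k → ℤ} (hx : x ∈ nonzeroBall k p) :
    l1 x ≤ p := by
  induction k generalizing p with
  | zero => simp [l1]
  | succ k ih =>
    obtain ⟨q, hq, htail, hx0⟩ := mem_nonzeroBall_succ.1 hx
    have := ih htail
    rw [l1, Fin.sum_univ_succ]
    simp only [l1, Fin.tail] at this
    omega

theorem nonzeroBall_subset_vertsE (k p : ℕ) : ↑(nonzeroBall k p) ⊆ vertsE k p :=
  fun _ hx => ⟨l1_le_of_mem_nonzeroBall hx, fun _ j _ _ => ne_zero_of_mem_nonzeroBall hx j⟩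

theorem card_nonzeroBall (k p : ℕ) : #(nonzeroBall k p) = 2 ^ k * p.choose k := by
  induction k generalizing p with
  | zero => simp [nonzeroBall]
  | succ k ih =>
    set A : ℕ → Finset (Fin (k + 1) → ℤ) := fun q =>
      (nonzeroBall k q).image (Fin.cons ((p - q : ℕ) : ℤ)) ∪
        (nonzeroBall k q).image (Fin.cons (-((p - q : ℕ) : ℤ))) with hA
    have head (q : ℕ) (x : Fin (k + 1) → ℤ) (hx : x ∈ A q) : (x 0).natAbs = p - q := by
      simp only [hA, mem_union, mem_image] at hx
      rcases hx with ⟨y, -, rfl⟩ | ⟨y, -, rfl⟩ <;> simp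
    have hcard (q : ℕ) (hq : q < p) : #(A q) = 2 ^ (k + 1) * q.choose k := by
      rw [hA, card_union_of_disjoint, card_image_of_injective _ (Fin.cons_right_injective _),
        card_image_of_injective _ (Fin.cons_right_injective _), ih, pow_succ]
      · ring
      · refine disjoint_left.2 fun x hx hx' => ?_
        obtain ⟨y, -, rfl⟩ := mem_image.1 hx
        obtain ⟨z, -, hz⟩ := mem_image.1 hx'
        have := congrFun hz 0
        simp only [Fin.cons_zero] at this
        omega
    have hdisj : (range p : Set ℕ).PairwiseDisjoint A := by
      intro q hq q' hq' hne
      refine disjoint_left.2 fun x hx hx' => hne ?_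
      have := mem_range.1 hq
      have := mem_range.1 hq'
      have := head q x hx
      have := head q' x hx'
      omega
    change #((range p).biUnion A) = _
    rw [card_biUnion hdisj, sum_congr rfl fun q hq => hcard q (mem_range.1 hq), ← mul_sum,
      Nat.sum_range_choose_eq_choose_succ]

theorem finite_vertsE (k p : ℕ) : (vertsE k p).Finite := by
  refine (Set.finite_Icc (-(p : Fin k → ℤ)) p).subset fun x hx => ⟨fun i => ?_, fun i => ?_⟩ <;>
  · have : (x i).natAbs ≤ l1 x := single_le_sum (f := fun j => (x j).natAbs) (by simp) (mem_univ i)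
    have := hx.1
    simp only [Pi.neg_apply, Pi.natCast_apply]
    omega

theorem ncard_vertsE_ge (k p : ℕ) :
    2 ^ k * (p : ℝ) ^ k / k.factorial - 2 ^ k * k ^ 2 / k.factorial * (p : ℝ) ^ (k - 1) ≤
      (vertsE k p).ncard := by
  have hsub := Set.ncard_le_ncard (nonzeroBall_subset_vertsE k p) (finite_vertsE k p)
  rw [Set.ncard_coe_finset, card_nonzeroBall] at hsub
  calc _ = 2 ^ k * ((p : ℝ) ^ k / k.factorial - k ^ 2 / k.factorial * (p : ℝ) ^ (k - 1)) := by
        ring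
    _ ≤ 2 ^ k * p.choose k := by gcongr; exact Nat.pow_div_factorial_sub_le_choose p k
    _ ≤ _ := by exact_mod_cast hsub

end Mesh

open Mesh in
theorem stmt10_general (k : ℕ) :
    ∃ C : ℝ, ∃ p0 : ℕ, ∀ p : ℕ, p0 ≤ p →
      ∃ H : (mesh k).Subgraph, ∃ h0 : (fun _ => (0 : ℤ)) ∈ H.verts,
        (∀ v, (H.neighborSet v).ncard ≤ 4)
        ∧ (H.neighborSet (fun _ => (0 : ℤ))).ncard ≤ 2
        ∧ (∀ v : H.verts, H.coe.Reachable v ⟨fun _ => 0, h0⟩ ∧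
            H.coe.dist v ⟨fun _ => 0, h0⟩ ≤ p)
        ∧ 2 ^ k * (p : ℝ) ^ k / k.factorial - C * (p : ℝ) ^ (k - 1) ≤ H.verts.ncard := by
  refine ⟨2 ^ k * k ^ 2 / k.factorial, 0, fun p _ => ⟨E k p, zero_mem_vertsE k p,
    fun v => ?_, ?_, fun v => ?_, ncard_vertsE_ge k p⟩⟩
  · linarith [ncard_neighborSet_E_le p v, ncard_isPivot_le_two v]
  · exact (ncard_neighborSet_E_le (k := k) p 0).trans
      (by linarith [ncard_isPivot_zero_le_one (k := k)])
  · obtain ⟨w, hw⟩ := exists_walk_E_length_le p v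
    exact ⟨⟨w⟩, (dist_le w).trans hw⟩

theorem stmt10 (k : ℕ) (hk : 1 ≤ k) :
    ∃ C : ℝ, ∃ p0 : ℕ, ∀ p : ℕ, p0 ≤ p →
      ∃ H : (mesh k).Subgraph, ∃ h0 : (fun _ => (0 : ℤ)) ∈ H.verts,
        (∀ v, (H.neighborSet v).ncard ≤ 4)
        ∧ (H.neighborSet (fun _ => (0 : ℤ))).ncard ≤ 2
        ∧ (∀ v : H.verts, H.coe.Reachable v ⟨fun _ => 0, h0⟩ ∧
            H.coe.dist v ⟨fun _ => 0, h0⟩ ≤ p)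
        ∧ 2 ^ k * (p : ℝ) ^ k / k.factorial - C * (p : ℝ) ^ (k - 1) ≤ H.verts.ncard :=
  stmt10_general k
end
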